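/- Let Ω be a nonempty finite set of points in ℝ² and let A, B ∈ Ω with d = dist(A, B) > 0. For θ ∈ ℝ let r(θ) = (cos θ, sin θ), let L(θ) = max over pairs x₁, x₂ ∈ Ω of |⟪r(θ), x₁⟫ − ⟪r(θ), x₂⟫|, and let ρ(Ω) be the principal stretch of Ω. Assume ρ(Ω) > 0 and L(θ) > 0 for all θ ∈ [0, π]. Then (1/π) · ∫₀^{π} |⟪r(θ), A − B⟫| / L(θ) dθ ≥ 2d/(π · ρ(Ω)). -/

import Mathlib

set_option maxHeartbeats 1000000


open MeasureTheory Real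

/-- The principal stretch of a (finite) set `Ω` of points in a real inner product
space: the supremum over unit vectors `r` and pairs `x₁, x₂ ∈ Ω` of
`|⟪r, x₁⟫ − ⟪r, x₂⟫|`. -/
noncomputable def principalStretch
    {V : Type*} [NormedAddCommGroup V] [InnerProductSpace ℝ V]
    (Ω : Finset V) : ℝ :=
  sSup {t : ℝ | ∃ r : V, ‖r‖ = 1 ∧
    ∃ x₁ ∈ Ω, ∃ x₂ ∈ Ω, t = |(inner ℝ r x₁ : ℝ) - (inner ℝ r x₂ : ℝ)|}

private lemma abs_cos_integral : ∫ x in (0:ℝ)..π, |cos x| = 2 := by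
  have hi : ∀ a b : ℝ, IntervalIntegrable (fun x => |cos x|) volume a b :=
    fun a b => (Real.continuous_cos.abs).intervalIntegrable a b
  rw [← intervalIntegral.integral_add_adjacent_intervals (b := π/2) (hi 0 (π/2)) (hi (π/2) π)]
  have h1 : ∫ x in (0:ℝ)..(π/2), |cos x| = 1 := by
    rw [intervalIntegral.integral_congr (g := cos) ?_]
    · simp
    · intro x hx
      rw [Set.uIcc_of_le (by positivity)] at hx
      exact abs_of_nonneg (Real.cos_nonneg_of_mem_Icc ⟨by linarith [hx.1, pi_pos], hx.2⟩)
  have h2 : ∫ x in (π/2:ℝ)..π, |cos x| = 1 := by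
    rw [intervalIntegral.integral_congr (g := fun x => -cos x) ?_]
    · simp [intervalIntegral.integral_neg]
    · intro x hx
      rw [Set.uIcc_of_le (by linarith [pi_pos])] at hx
      exact abs_of_nonpos (Real.cos_nonpos_of_pi_div_two_le_of_le hx.1 (by linarith [hx.2, pi_pos]))
  rw [h1, h2]; norm_num

private lemma phase_integral (a b dd : ℝ) (hdd : dd = Real.sqrt (a^2+b^2)) (hpos : 0 < dd) :
    ∫ θ in (0:ℝ)..π, |cos θ * a + sin θ * b| = 2 * dd := by
  set z : ℂ := ⟨a, b⟩ with hz
  have habs : ‖z‖ = dd := by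
    rw [Complex.norm_def, Complex.normSq_mk, hdd]; ring_nf
  have hzne : z ≠ 0 := by
    intro h; rw [h, norm_zero] at habs; linarith
  have hcos : Real.cos z.arg = a / dd := by rw [Complex.cos_arg hzne, habs]
  have hsin : Real.sin z.arg = b / dd := by rw [Complex.sin_arg, habs]
  have key : ∀ θ : ℝ, cos θ * a + sin θ * b = dd * Real.cos (θ - z.arg) := by
    intro θ; rw [Real.cos_sub, hcos, hsin]; field_simp
  simp_rw [key, abs_mul, abs_of_pos hpos]
  rw [intervalIntegral.integral_const_mul,
    intervalIntegral.integral_comp_sub_right (fun u => |Real.cos u|) z.arg]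
  have per : Function.Periodic (fun x => |Real.cos x|) π := by
    intro x; simp [Real.cos_add]
  have h := per.intervalIntegral_add_eq (-z.arg) 0
  rw [show (0:ℝ) - z.arg = -z.arg from by ring, show π - z.arg = -z.arg + π from by ring,
    h, zero_add, abs_cos_integral]
  ring

private lemma cont_sup' {ι : Type*} (s : Finset ι) (hs : s.Nonempty) (f : ι → ℝ → ℝ)
    (hf : ∀ i ∈ s, Continuous (f i)) :
    Continuous fun x => s.sup' hs fun i => f i x := by
  rw [continuous_iff_continuousAt]
  intro x
  exact Filter.Tendsto.finset_sup'_nhds_apply hs fun i hi => (hf i hi).continuousAt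

/-- The paper's Theorem 1 in the plane.  For a nonempty finite set `Ω ⊆ ℝ²` with
positive principal stretch, two points `A, B ∈ Ω` at distance `d > 0`, the random
direction `r θ = (cos θ, sin θ)` with `θ` uniform on `[0, π]`, and `L θ` the length
of the range of the projections of `Ω` onto `r θ`, the probability
`(1/π) ∫₀^π |⟪r θ, A − B⟫| / L θ dθ` that one random projection split separates
`A` and `B` is at least `2d/(π ρ(Ω))`. -/
theorem separation_prob_ge
    (Ω : Finset (EuclideanSpace ℝ (Fin 2))) (hne : Ω.Nonempty)
    (A B : EuclideanSpace ℝ (Fin 2)) (hA : A ∈ Ω) (hB : B ∈ Ω)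
    (d : ℝ) (hd : d = dist A B) (hdpos : 0 < d)
    (r : ℝ → EuclideanSpace ℝ (Fin 2))
    (hr : ∀ θ, r θ = (WithLp.equiv 2 (Fin 2 → ℝ)).symm ![Real.cos θ, Real.sin θ])
    (L : ℝ → ℝ)
    (hL : ∀ θ, L θ = (Ω ×ˢ Ω).sup' (hne.product hne)
        (fun p => |(inner ℝ (r θ) p.1 : ℝ) - (inner ℝ (r θ) p.2 : ℝ)|))
    (hρ : 0 < principalStretch Ω)
    (hLpos : ∀ θ ∈ Set.Icc (0 : ℝ) Real.pi, 0 < L θ) :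
    (1 / Real.pi) * ∫ θ in (0 : ℝ)..Real.pi, |(inner ℝ (r θ) (A - B) : ℝ)| / L θ ≥
      2 * d / (Real.pi * principalStretch Ω) := by
  have hπ := Real.pi_pos
  set ρ := principalStretch Ω with hρdef
  have hinner : ∀ (θ : ℝ) (x : EuclideanSpace ℝ (Fin 2)),
      (inner ℝ (r θ) x : ℝ) = Real.cos θ * x 0 + Real.sin θ * x 1 := by
    intro θ x; rw [hr]; simp [EuclideanSpace.inner_eq_star_dotProduct, Matrix.vecHead, Matrix.vecTail, mul_comm]
  have hrnorm : ∀ θ : ℝ, ‖r θ‖ = 1 := by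
    intro θ; rw [hr, EuclideanSpace.norm_eq]; simp [Fin.sum_univ_two]
  -- L θ ≤ ρ
  have hbdd : BddAbove {t : ℝ | ∃ u : EuclideanSpace ℝ (Fin 2), ‖u‖ = 1 ∧
      ∃ x₁ ∈ Ω, ∃ x₂ ∈ Ω, t = |(inner ℝ u x₁ : ℝ) - (inner ℝ u x₂ : ℝ)|} := by
    refine ⟨(Ω ×ˢ Ω).sup' (hne.product hne) (fun p => ‖p.1 - p.2‖), ?_⟩
    rintro t ⟨u, hu, x₁, h₁, x₂, h₂, rfl⟩
    have e1 : |(inner ℝ u x₁ : ℝ) - (inner ℝ u x₂ : ℝ)| = |(inner ℝ u (x₁ - x₂) : ℝ)| := by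
      rw [inner_sub_right]
    have e2 : |(inner ℝ u (x₁ - x₂) : ℝ)| ≤ ‖u‖ * ‖x₁ - x₂‖ := abs_real_inner_le_norm u (x₁ - x₂)
    have e3 : ‖x₁ - x₂‖ ≤ (Ω ×ˢ Ω).sup' (hne.product hne) (fun p => ‖p.1 - p.2‖) := by
      have := Finset.le_sup' (s := Ω ×ˢ Ω) (b := (x₁, x₂))
        (fun p : EuclideanSpace ℝ (Fin 2) × EuclideanSpace ℝ (Fin 2) => ‖p.1 - p.2‖)
        (Finset.mem_product.mpr ⟨h₁, h₂⟩)
      exact this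
    rw [hu, one_mul] at e2
    rw [e1]
    exact e2.trans e3
  have hLρ : ∀ θ : ℝ, L θ ≤ ρ := by
    intro θ
    rw [hL]
    apply Finset.sup'_le
    intro p hp
    exact le_csSup hbdd ⟨r θ, hrnorm θ, p.1, (Finset.mem_product.mp hp).1,
      p.2, (Finset.mem_product.mp hp).2, rfl⟩
  -- the exact integral of the numerator
  have hdval : d = Real.sqrt (((A - B) 0)^2 + ((A - B) 1)^2) := by
    rw [hd, dist_eq_norm, EuclideanSpace.norm_eq]
    simp [Fin.sum_univ_two, sq_abs]
  have hnum : ∫ θ in (0:ℝ)..π, |(inner ℝ (r θ) (A - B) : ℝ)| = 2 * d := by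
    simp_rw [hinner]
    exact phase_integral _ _ _ hdval hdpos
  -- continuity / integrability
  have hgcont : Continuous fun θ => (inner ℝ (r θ) (A - B) : ℝ) := by
    have : (fun θ => (inner ℝ (r θ) (A - B) : ℝ))
        = fun θ => Real.cos θ * (A - B) 0 + Real.sin θ * (A - B) 1 :=
      funext fun θ => hinner θ _
    rw [this]; fun_prop
  have hLcont : Continuous L := by
    have : L = fun θ => (Ω ×ˢ Ω).sup' (hne.product hne)
        fun p => |(Real.cos θ * p.1 0 + Real.sin θ * p.1 1)
          - (Real.cos θ * p.2 0 + Real.sin θ * p.2 1)| := by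
      funext θ
      rw [hL]
      exact Finset.sup'_congr _ rfl fun p _ => by rw [hinner, hinner]
    rw [this]
    exact cont_sup' _ _ _ (fun p _ => by fun_prop)
  have hfint : IntervalIntegrable (fun θ => |(inner ℝ (r θ) (A - B) : ℝ)| / L θ) volume 0 π := by
    apply ContinuousOn.intervalIntegrable
    rw [Set.uIcc_of_le hπ.le]
    exact hgcont.abs.continuousOn.div hLcont.continuousOn fun θ hθ => (hLpos θ hθ).ne'
  have hlowint : IntervalIntegrable (fun θ => |(inner ℝ (r θ) (A - B) : ℝ)| / ρ) volume 0 π :=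
    ((hgcont.abs).div_const ρ).intervalIntegrable 0 π
  have hmono : (∫ θ in (0:ℝ)..π, |(inner ℝ (r θ) (A - B) : ℝ)| / ρ)
      ≤ ∫ θ in (0:ℝ)..π, |(inner ℝ (r θ) (A - B) : ℝ)| / L θ := by
    apply intervalIntegral.integral_mono_on hπ.le hlowint hfint
    intro θ hθ
    gcongr
    · exact hLpos θ hθ
    · exact hLρ θ
  have hlow : (∫ θ in (0:ℝ)..π, |(inner ℝ (r θ) (A - B) : ℝ)| / ρ) = 2 * d / ρ := by
    rw [intervalIntegral.integral_div, hnum]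
  rw [ge_iff_le, show 2 * d / (π * ρ) = (1/π) * (2 * d / ρ) from by field_simp]
  apply mul_le_mul_of_nonneg_left _ (by positivity)
  rw [← hlow]
  exact hmono
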